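/- arXiv:2307.10692 — 5 statements merged into one kernel-verified Lean document; each statement's English description precedes it below -/
import Mathlib

section
/- Let F be the free group on an infinite set X, let Y ⊆ X with |Y| < |X| and Y infinite, and let A = ⟨Y⟩. Then A is an elementary subgroup of F: for every first-order formula φ(t, z̄) in the language of groups and every tuple ā from A, if there exists b ∈ F with F ⊨ φ(b, ā), then there exists c ∈ A with F ⊨ φ(c, ā). -/
open FirstOrder

/-- The first-order language of groups: a constant `1`, a unary function `⁻¹`, and a
binary function `*`. -/
def groupLang : Language :=
  ⟨fun n => match n with | 0 => PUnit | 1 => PUnit | 2 => PUnit | _ => Empty,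
   fun _ => Empty⟩

/-- Any group is a structure for the language of groups. -/
instance groupLang.structureOfGroup (G : Type*) [Group G] : groupLang.Structure G where
  funMap {n} f v :=
    match n, f, v with
    | 0, _, _ => 1
    | 1, _, v => (v 0)⁻¹
    | 2, _, v => v 0 * v 1
  RelMap {n} r _ := r.elim

/-- A multiplicative equivalence of groups is an equivalence of `groupLang`-structures. -/
def mulEquivToLangEquiv {G H : Type*} [Group G] [Group H] (e : G ≃* H) :
    @FirstOrder.Language.Equiv groupLang G H _ _ where
  toEquiv := e.toEquiv
  map_fun' := by
    intro n f x
    match n, f with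
    | 0, _ => exact map_one e
    | 1, _ => exact map_inv e _
    | 2, _ => exact map_mul e _ _
  map_rel' := by intro n r; exact r.elim

lemma mem_closure_of_letters {X : Type} (S : Set X) (L : List (X × Bool))
    (h : ∀ p ∈ L, p.1 ∈ S) :
    FreeGroup.mk L ∈ Subgroup.closure (FreeGroup.of '' S) := by
  induction L with
  | nil => rw [← FreeGroup.one_eq_mk]; exact one_mem _
  | cons p L ih =>
    have hsplit : FreeGroup.mk (p :: L) = FreeGroup.mk [p] * FreeGroup.mk L := by
      rw [FreeGroup.mul_mk]; rfl
    rw [hsplit]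
    refine mul_mem ?_ (ih fun q hq => h q (List.mem_cons_of_mem _ hq))
    have hp : p.1 ∈ S := h p List.mem_cons_self
    rcases p with ⟨x, b⟩
    cases b with
    | false =>
      have hx : FreeGroup.mk [(x, false)] = (FreeGroup.of x)⁻¹ := by
        rw [FreeGroup.of, FreeGroup.inv_mk]
        simp [FreeGroup.invRev]
      rw [hx]
      exact inv_mem (Subgroup.subset_closure ⟨x, hp, rfl⟩)
    | true => exact Subgroup.subset_closure ⟨x, hp, rfl⟩

lemma letters_mem_of_mem_closure {X : Type} [DecidableEq X] (S : Set X) {g : FreeGroup X}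
    (hg : g ∈ Subgroup.closure (FreeGroup.of '' S)) :
    ∀ p ∈ g.toWord, p.1 ∈ S := by
  refine Subgroup.closure_induction (p := fun g _ => ∀ p ∈ g.toWord, p.1 ∈ S)
    ?_ ?_ ?_ ?_ hg
  · rintro _ ⟨x, hx, rfl⟩ p hp
    rw [FreeGroup.toWord_of, List.mem_singleton] at hp
    rw [hp]
    exact hx
  · intro p hp
    rw [FreeGroup.toWord_one] at hp
    simp at hp
  · intro x y _ _ hx hy p hp
    have := (FreeGroup.toWord_mul_sublist x y).subset hp
    rcases List.mem_append.mp this with h | h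
    · exact hx p h
    · exact hy p h
  · intro x _ hx p hp
    rw [FreeGroup.toWord_inv] at hp
    simp only [FreeGroup.invRev, List.mem_reverse, List.mem_map] at hp
    obtain ⟨q, hq, rfl⟩ := hp
    exact hx q hq

/-- Let `F` be the free group on an infinite set `X`, `Y ⊆ X` infinite with `|Y| < |X|`,
and `A = ⟨Y⟩`. Then `A` is an elementary subgroup of `F` via the Tarski–Vaught test:
for every first-order formula `φ(t, z̄)` in the language of groups and tuple `ā` from
`A`, if some `b ∈ F` satisfies `F ⊨ φ(b, ā)`, then some `c ∈ A` does. -/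
theorem stmt_3 {X : Type} [Infinite X] (Y : Set X) [Infinite ↥Y]
    (hlt : Cardinal.mk ↥Y < Cardinal.mk X)
    (A : Subgroup (FreeGroup X)) (hA : A = Subgroup.closure (FreeGroup.of '' Y))
    (n : ℕ) (φ : groupLang.Formula (Fin n ⊕ Fin 1))
    (a : Fin n → FreeGroup X) (ha : ∀ i, a i ∈ A)
    (b : FreeGroup X) (hb : φ.Realize (Sum.elim a fun _ => b)) :
    ∃ c ∈ A, φ.Realize (Sum.elim a fun _ => c) := by
  classical
  subst hA
  -- finite sets of letters
  let lw : FreeGroup X → Finset X := fun g => (g.toWord.map Prod.fst).toFinset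
  let Wa : Finset X := Finset.univ.biUnion fun i => lw (a i)
  let Wb : Finset X := lw b
  let W : Finset X := Wa ∪ Wb
  let T : Finset X := Wb.filter fun x => x ∉ Y
  have hYinf : Y.Infinite := Set.infinite_coe_iff.mp inferInstance
  have hinf : (Y \ ↑W).Infinite := hYinf.diff W.finite_toSet
  obtain ⟨U, hUsub, hUfin, hUcard⟩ := hinf.exists_subset_ncard_eq T.card
  let U' : Finset X := hUfin.toFinset
  have hU' : ∀ x ∈ U', x ∈ Y ∧ x ∉ W := by
    intro x hx
    have : x ∈ Y \ ↑W := hUsub (hUfin.mem_toFinset.mp hx)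
    exact ⟨this.1, fun h => this.2 h⟩
  have hT : ∀ x ∈ T, x ∈ Wb ∧ x ∉ Y := by
    intro x hx
    simpa [T] using Finset.mem_filter.mp hx
  have hcard : T.card = U'.card := by
    rw [← hUcard, Set.ncard_eq_toFinset_card _ hUfin]
  let e : ↥T ≃ ↥U' := Finset.equivOfCardEq hcard
  have hTU : ∀ x, x ∈ T → x ∉ U' := fun x hx hx' => (hU' x hx').2 <|
    Finset.mem_union.mpr (Or.inr (hT x hx).1)
  have hUT : ∀ x, x ∈ U' → x ∉ T := fun x hx hx' => hTU x hx' hx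
  let f : X → X := fun x =>
    if h : x ∈ T then (e ⟨x, h⟩ : X)
    else if h : x ∈ U' then (e.symm ⟨x, h⟩ : X) else x
  have hf : Function.Involutive f := by
    intro x
    by_cases h : x ∈ T
    · have h1 : (e ⟨x, h⟩ : X) ∈ U' := (e ⟨x, h⟩).2
      simp only [f, dif_pos h]
      rw [dif_neg (hUT _ h1), dif_pos h1]
      have : (⟨(e ⟨x, h⟩ : X), h1⟩ : ↥U') = e ⟨x, h⟩ := rfl
      rw [this, Equiv.symm_apply_apply]
    · by_cases h2 : x ∈ U'
      · have h1 : (e.symm ⟨x, h2⟩ : X) ∈ T := (e.symm ⟨x, h2⟩).2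
        simp only [f, dif_neg h, dif_pos h2, dif_pos h1]
        have : (⟨(e.symm ⟨x, h2⟩ : X), h1⟩ : ↥T) = e.symm ⟨x, h2⟩ := rfl
        rw [this, Equiv.apply_symm_apply]
      · simp only [f, dif_neg h, dif_neg h2]
  let σ : Equiv.Perm X := Function.Involutive.toPerm f hf
  have hσ : ∀ x, σ x = f x := fun _ => rfl
  have hσfix : ∀ x, x ∉ T → x ∉ U' → σ x = x := by
    intro x h1 h2; rw [hσ]; simp only [f, dif_neg h1, dif_neg h2]
  -- σ maps letters of b into Y
  have key1 : ∀ x ∈ Wb, σ x ∈ Y := by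
    intro x hx
    by_cases h : x ∈ T
    · rw [hσ]; simp only [f, dif_pos h]
      exact (hU' _ (e ⟨x, h⟩).2).1
    · have hxY : x ∈ Y := by
        by_contra hxY
        exact h (Finset.mem_filter.mpr ⟨hx, hxY⟩)
      have hxU : x ∉ U' := fun h' => (hU' x h').2 (Finset.mem_union.mpr (Or.inr hx))
      rw [hσfix x h hxU]; exact hxY
  -- σ fixes the letters of each a i
  have key2 : ∀ i, ∀ x ∈ lw (a i), σ x = x := by
    intro i x hx
    have hxY : x ∈ Y := by
      have hlet := letters_mem_of_mem_closure Y (ha i)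
      simp only [lw, List.mem_toFinset, List.mem_map] at hx
      obtain ⟨p, hp, rfl⟩ := hx
      exact hlet p hp
    have hxT : x ∉ T := fun h => (hT x h).2 hxY
    have hxU : x ∉ U' := fun h' => (hU' x h').2 <| Finset.mem_union.mpr <|
      Or.inl <| Finset.mem_biUnion.mpr ⟨i, Finset.mem_univ i, hx⟩
    exact hσfix x hxT hxU
  let ψ : FreeGroup X ≃* FreeGroup X := FreeGroup.freeGroupCongr σ
  have hψof : ∀ x, ψ (FreeGroup.of x) = FreeGroup.of (σ x) := by
    intro x
    simp [ψ, FreeGroup.freeGroupCongr_apply, FreeGroup.map.of]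
  -- ψ fixes each a i
  have hψa : ∀ i, ψ (a i) = a i := by
    intro i
    have hmem : a i ∈ Subgroup.closure (FreeGroup.of '' (↑(lw (a i)) : Set X)) := by
      have hh := mem_closure_of_letters (↑(lw (a i)) : Set X) (a i).toWord ?_
      · rwa [FreeGroup.mk_toWord] at hh
      intro p hp
      simp only [lw, Finset.coe_sort_coe, List.coe_toFinset, List.mem_map, Set.mem_setOf_eq]
      exact ⟨p, hp, rfl⟩
    refine Subgroup.closure_induction (p := fun g _ => ψ g = g) ?_ ?_ ?_ ?_ hmem
    · rintro _ ⟨x, hx, rfl⟩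
      rw [hψof, key2 i x (by exact_mod_cast hx)]
    · exact map_one ψ
    · intro x y _ _ hx hy; rw [map_mul, hx, hy]
    · intro x _ hx; rw [map_inv, hx]
  -- ψ b lies in the closure of Y
  have hψb : ψ b ∈ Subgroup.closure (FreeGroup.of '' Y) := by
    have hbmem : b ∈ Subgroup.closure (FreeGroup.of '' (↑Wb : Set X)) := by
      have hh := mem_closure_of_letters (↑Wb : Set X) b.toWord ?_
      · rwa [FreeGroup.mk_toWord] at hh
      intro p hp
      simp only [Wb, lw, Finset.coe_sort_coe, List.coe_toFinset, List.mem_map, Set.mem_setOf_eq]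
      exact ⟨p, hp, rfl⟩
    have h1 : ψ b ∈ Subgroup.map ψ.toMonoidHom (Subgroup.closure (FreeGroup.of '' (↑Wb : Set X))) :=
      ⟨b, hbmem, rfl⟩
    rw [MonoidHom.map_closure] at h1
    refine Subgroup.closure_mono ?_ h1
    rintro _ ⟨_, ⟨x, hx, rfl⟩, rfl⟩
    refine ⟨σ x, key1 x (by exact_mod_cast hx), ?_⟩
    exact (hψof x).symm
  refine ⟨ψ b, hψb, ?_⟩
  have hreal := (Language.StrongHomClass.realize_formula (mulEquivToLangEquiv ψ)
    φ (v := Sum.elim a fun _ => b)).mpr hb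
  have heq : ((mulEquivToLangEquiv ψ) ∘ Sum.elim a fun _ => b : Fin n ⊕ Fin 1 → FreeGroup X)
      = Sum.elim a fun _ => ψ b := by
    funext p
    cases p with
    | inl i => exact hψa i
    | inr j => rfl
  rwa [heq] at hreal
end

section
/- Let A be the free group on generators x_0, x_1, x_2, ... and for each i < ω set y_i = x_i * x_{i+1}^{-2}. Then for every n, the subgroup B_n generated by {y_0, ..., y_n} extends to a free basis of A; equivalently, {y_0, ..., y_n, x_{n+1}, x_{n+2}, ...} is a free basis of A. -/
/-- Auxiliary: downward-recursive inverse images of the generators. -/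
def auxg : ℕ → ℕ → FreeGroup ℕ
  | 0, i => FreeGroup.of i
  | k + 1, i => FreeGroup.of i * (auxg k (i + 1)) ^ 2

/-- In the free group on `x_0, x_1, ...`, with `y_i = x_i * x_{i+1}⁻²`, for every `n`
the family `{y_0, ..., y_n, x_{n+1}, x_{n+2}, ...}` is a free basis of the whole group:
there is an automorphism sending the standard basis to this family. -/
theorem stmt_5 (y : ℕ → FreeGroup ℕ)
    (hy : ∀ i, y i = FreeGroup.of i * ((FreeGroup.of (i + 1)) ^ 2)⁻¹) (n : ℕ) :
    ∃ e : FreeGroup ℕ ≃* FreeGroup ℕ,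
      ∀ i, e (FreeGroup.of i) = if i ≤ n then y i else FreeGroup.of i := by
  set f : ℕ → FreeGroup ℕ := fun i => if i ≤ n then y i else FreeGroup.of i with hf
  set φ : FreeGroup ℕ →* FreeGroup ℕ := FreeGroup.lift f with hφ
  set g : ℕ → FreeGroup ℕ := fun i => auxg (n + 1 - i) i with hg
  set ψ : FreeGroup ℕ →* FreeGroup ℕ := FreeGroup.lift g with hψ
  -- φ applied to auxg gives back generators
  have key : ∀ k i, k = n + 1 - i → φ (auxg k i) = FreeGroup.of i := by
    intro k
    induction k with
    | zero =>
      intro i h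
      have hi : ¬ i ≤ n := by omega
      simp [auxg, hφ, hf, hi]
    | succ k ih =>
      intro i h
      have hi : i ≤ n := by omega
      have hk : k = n + 1 - (i + 1) := by omega
      simp only [auxg, map_mul, map_pow, ih (i + 1) hk]
      have : φ (FreeGroup.of i) = y i := by simp [hφ, hf, hi]
      rw [this, hy i]
      group
  have hφg : ∀ i, φ (g i) = FreeGroup.of i := fun i => key _ i rfl
  have hψf : ∀ i, ψ (f i) = FreeGroup.of i := by
    intro i
    by_cases hi : i ≤ n
    · have h1 : n + 1 - i = (n - i) + 1 := by omega
      have h2 : n + 1 - (i + 1) = n - i := by omega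
      simp only [hf, if_pos hi, hy i, map_mul, map_inv, map_pow, hψ, FreeGroup.lift_apply_of]
      show g i * (g (i + 1) ^ 2)⁻¹ = _
      rw [hg]
      simp only [h1, h2, auxg]
      group
    · simp [hf, if_neg hi, hψ]
      show g i = FreeGroup.of i
      have : n + 1 - i = 0 := by omega
      simp [hg, this, auxg]
  have c1 : ψ.comp φ = MonoidHom.id _ := by
    apply FreeGroup.ext_hom
    intro i
    simp only [MonoidHom.comp_apply, MonoidHom.id_apply]
    rw [show φ (FreeGroup.of i) = f i from FreeGroup.lift_apply_of]
    exact hψf i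
  have c2 : φ.comp ψ = MonoidHom.id _ := by
    apply FreeGroup.ext_hom
    intro i
    simp only [MonoidHom.comp_apply, MonoidHom.id_apply]
    rw [show ψ (FreeGroup.of i) = g i from FreeGroup.lift_apply_of]
    exact hφg i
  refine ⟨MonoidHom.toMulEquiv φ ψ c1 c2, fun i => ?_⟩
  show φ (FreeGroup.of i) = _
  simp [hφ, hf]
end

section
/- Every finitely generated free group is Hopfian: every surjective group endomorphism of a free group of finite rank is an automorphism. -/
namespace HopfAux

variable {n : ℕ}

/-- No cancelling adjacent pair. -/
def NC (r : List (Fin n × Bool)) : Prop :=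
  ∀ (j : ℕ) (a : Fin n) (b : Bool),
    ¬(r[j]? = some (a, b) ∧ r[j+1]? = some (a, !b))

variable (r : List (Fin n × Bool)) (a : Fin n)

def pD (k : Fin (r.length + 1)) : Prop :=
  r[(k : ℕ)]? = some (a, true) ∨ ((k : ℕ) ≠ 0 ∧ r[(k : ℕ) - 1]? = some (a, false))

def qR (k : Fin (r.length + 1)) : Prop :=
  ((k : ℕ) ≠ 0 ∧ r[(k : ℕ) - 1]? = some (a, true)) ∨ r[(k : ℕ)]? = some (a, false)

instance : DecidablePred (pD r a) := fun _ => by unfold pD; infer_instance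
instance : DecidablePred (qR r a) := fun _ => by unfold qR; infer_instance

def fDR : {k // pD r a k} → {k // qR r a k} := fun ⟨k, hk⟩ =>
  if h : r[(k : ℕ)]? = some (a, true) then
    ⟨⟨(k : ℕ) + 1, by have := (List.getElem?_eq_some_iff.mp h).1; omega⟩,
      Or.inl ⟨Nat.succ_ne_zero _, by simpa using h⟩⟩
  else
    have h2 := hk.resolve_left h
    ⟨⟨(k : ℕ) - 1, by have := k.isLt; omega⟩, Or.inr h2.2⟩

def gRD : {k // qR r a k} → {k // pD r a k} := fun ⟨k, hk⟩ =>
  if h : (k : ℕ) ≠ 0 ∧ r[(k : ℕ) - 1]? = some (a, true) then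
    ⟨⟨(k : ℕ) - 1, by have := k.isLt; omega⟩, Or.inl h.2⟩
  else
    have h2 := hk.resolve_left h
    ⟨⟨(k : ℕ) + 1, by have := (List.getElem?_eq_some_iff.mp h2).1; omega⟩,
      Or.inr ⟨Nat.succ_ne_zero _, by simpa using h2⟩⟩

variable (hr : NC r)

noncomputable def eDR : {k // pD r a k} ≃ {k // qR r a k} where
  toFun := fDR r a
  invFun := gRD r a
  left_inv := by
    rintro ⟨k, hk⟩
    by_cases h : r[(k : ℕ)]? = some (a, true)
    · simp only [fDR, h, dif_pos]
      have hcond : ((⟨(k : ℕ) + 1, by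
            have := (List.getElem?_eq_some_iff.mp h).1; omega⟩ : Fin (r.length + 1)) : ℕ) ≠ 0 ∧
          r[((k : ℕ) + 1) - 1]? = some (a, true) := ⟨Nat.succ_ne_zero _, by simpa using h⟩
      simp only [gRD]
      rw [dif_pos (by simpa using hcond)]
      apply Subtype.ext; apply Fin.ext; simp
    · have h2 := hk.resolve_left h
      simp only [fDR]
      rw [dif_neg h]
      -- now gRD at ⟨k-1⟩; its condition must be false
      have hkpos : (k : ℕ) ≠ 0 := h2.1
      have hcondF : ¬(((k : ℕ) - 1) ≠ 0 ∧ r[((k : ℕ) - 1) - 1]? = some (a, true)) := by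
        rintro ⟨h3, h4⟩
        exact hr ((k : ℕ) - 2) a true ⟨by have e : (k : ℕ) - 2 = (k : ℕ) - 1 - 1 := (by omega : (k : ℕ) - 2 = (k : ℕ) - 1 - 1); rw [e]; exact h4, by
          have : (k : ℕ) - 2 + 1 = (k : ℕ) - 1 := by omega
          rw [this]; exact h2.2⟩
      simp only [gRD]
      rw [dif_neg (by simpa using hcondF)]
      apply Subtype.ext; apply Fin.ext; simp; omega
  right_inv := by
    rintro ⟨k, hk⟩
    by_cases h : (k : ℕ) ≠ 0 ∧ r[(k : ℕ) - 1]? = some (a, true)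
    · simp only [gRD]
      rw [dif_pos h]
      simp only [fDR]
      rw [dif_pos (by simpa using h.2)]
      apply Subtype.ext; apply Fin.ext; simp; omega
    · have h2 := hk.resolve_left h
      simp only [gRD]
      rw [dif_neg h]
      have hcondF : ¬(r[(k : ℕ) + 1]? = some (a, true)) := by
        intro h3
        exact hr (k : ℕ) a false ⟨h2, by simpa using h3⟩
      simp only [fDR]
      rw [dif_neg (by simpa using hcondF)]
      apply Subtype.ext; apply Fin.ext; simp

noncomputable def sigma : Equiv.Perm (Fin (r.length + 1)) :=
  (eDR r a hr).extendSubtype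

theorem sigma_pos {m : ℕ} (h : r[m]? = some (a, true)) (hm : m < r.length + 1) :
    sigma r a hr ⟨m, hm⟩ = ⟨m + 1, by have := (List.getElem?_eq_some_iff.mp h).1; omega⟩ := by
  have hp : pD r a ⟨m, hm⟩ := Or.inl h
  rw [sigma, Equiv.extendSubtype_apply_of_mem _ _ hp]
  have : eDR r a hr ⟨⟨m, hm⟩, hp⟩ = fDR r a ⟨⟨m, hm⟩, hp⟩ := rfl
  rw [this]
  simp only [fDR]
  rw [dif_pos (by simpa using h)]

theorem sigma_neg {m : ℕ} (h : r[m]? = some (a, false)) (hm : m + 1 < r.length + 1) :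
    sigma r a hr ⟨m + 1, hm⟩ = ⟨m, by omega⟩ := by
  have hp : pD r a ⟨m + 1, hm⟩ := Or.inr ⟨Nat.succ_ne_zero _, by simpa using h⟩
  rw [sigma, Equiv.extendSubtype_apply_of_mem _ _ hp]
  have : eDR r a hr ⟨⟨m + 1, hm⟩, hp⟩ = fDR r a ⟨⟨m + 1, hm⟩, hp⟩ := rfl
  rw [this]
  have hcondF : ¬(r[m + 1]? = some (a, true)) := by
    intro h3
    exact hr m a false ⟨h, by simpa using h3⟩
  simp only [fDR]
  rw [dif_neg (by simpa using hcondF)]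
  apply Fin.ext; simp

end HopfAux

namespace HopfAux

variable {n : ℕ}

noncomputable def pi (r : List (Fin n × Bool)) (hr : NC r) :
    Fin n × Bool → Equiv.Perm (Fin (r.length + 1)) :=
  fun x => cond x.2 (sigma r x.1 hr) (sigma r x.1 hr)⁻¹

theorem walk (r : List (Fin n × Bool)) (hr : NC r) :
    ∀ (t : List (Fin n × Bool)), t <:+ r.reverse →
    ∀ (h0 : (0 : ℕ) < r.length + 1) (h1 : t.length < r.length + 1),
    ((t.map (pi r hr)).prod) ⟨0, h0⟩ = ⟨t.length, h1⟩ := by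
  intro t
  induction t with
  | nil => intro _ _ _; simp
  | cons x t' ih =>
    intro ht h0 h1
    have ht' : t' <:+ r.reverse := (List.suffix_cons x t').trans ht
    obtain ⟨s, hs⟩ := ht
    have hrw : r = t'.reverse ++ x :: s.reverse := by
      rw [← List.reverse_reverse r, ← hs]
      simp [List.reverse_append, List.append_assoc]
    have hx : r[t'.length]? = some x := by
      rw [hrw, List.getElem?_append_right (by simp)]
      simp
    have hmL : t'.length < r.length := (List.getElem?_eq_some_iff.mp hx).1
    rw [List.map_cons, List.prod_cons, Equiv.Perm.mul_apply,
      ih ht' h0 (by omega)]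
    obtain ⟨a, b⟩ := x
    cases b with
    | true =>
      show sigma r a hr ⟨t'.length, _⟩ = _
      exact sigma_pos r a hr hx _
    | false =>
      show (sigma r a hr)⁻¹ ⟨t'.length, _⟩ = _
      rw [Equiv.Perm.inv_eq_iff_eq]
      exact (sigma_neg r a hr hx (by omega)).symm

theorem nc_toWord (w : FreeGroup (Fin n)) : NC w.toWord.reverse := by
  intro j a b ⟨h1, h2⟩
  set r := w.toWord.reverse with hrdef
  have hj1 := (List.getElem?_eq_some_iff.mp h1)
  have hj2 := (List.getElem?_eq_some_iff.mp h2)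
  have hr1 : r = r.take j ++ (a, b) :: (a, !b) :: r.drop (j + 2) := by
    conv_lhs => rw [← List.take_append_drop j r]
    congr 1
    rw [List.drop_eq_getElem_cons hj1.1, hj1.2]
    congr 1
    rw [List.drop_eq_getElem_cons hj2.1, hj2.2]
  have hl : w.toWord = (r.drop (j + 2)).reverse ++ (a, !b) :: (a, !(!b)) :: (r.take j).reverse := by
    rw [Bool.not_not]
    have := congrArg List.reverse hr1
    rw [List.reverse_reverse] at this
    rw [this]
    simp [List.reverse_append, List.append_assoc]
  exact FreeGroup.reduce.not (L₁ := w.toWord) (by rw [FreeGroup.reduce_toWord, hl])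

theorem resfin (w : FreeGroup (Fin n)) (hw : w ≠ 1) :
    ∃ (N : ℕ) (φ : FreeGroup (Fin n) →* Equiv.Perm (Fin N)), φ w ≠ 1 := by
  set l := w.toWord with hl
  set r := l.reverse with hrdef
  have hnc : NC r := nc_toWord w
  refine ⟨r.length + 1, FreeGroup.lift (fun a => sigma r a hnc), ?_⟩
  intro hcon
  have hlen : l.length ≠ 0 := by
    intro h
    exact hw (FreeGroup.toWord_eq_nil_iff.mp (List.eq_nil_of_length_eq_zero h))
  have hlr : l.length < r.length + 1 := by simp [hrdef]
  have h0 : (0:ℕ) < r.length + 1 := by omega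
  have hwmk : w = FreeGroup.mk l := (FreeGroup.mk_toWord).symm
  have hval : (FreeGroup.lift (fun a => sigma r a hnc)) w = (l.map (pi r hnc)).prod := by
    rw [hwmk, FreeGroup.lift_mk]
    rfl
  have hwalk := walk r hnc l (by rw [hrdef, List.reverse_reverse]) h0 hlr
  rw [hcon] at hval
  have : (⟨0, h0⟩ : Fin (r.length + 1)) = ⟨l.length, hlr⟩ := by
    rw [← hwalk, ← hval]; rfl
  have := Fin.mk.injEq .. ▸ this
  omega

end HopfAux

/-- Every finitely generated free group is Hopfian: every surjective endomorphism of a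
free group of finite rank is an automorphism (i.e. bijective). -/
theorem stmt_8 (n : ℕ) (f : FreeGroup (Fin n) →* FreeGroup (Fin n))
    (hf : Function.Surjective f) : Function.Bijective f := by
  refine ⟨?_, hf⟩
  have hker : ∀ w, f w = 1 → w = 1 := by
    intro w hw1
    by_contra hw
    obtain ⟨N, φ, hφ⟩ := HopfAux.resfin w hw
    have hfin : Finite (FreeGroup (Fin n) →* Equiv.Perm (Fin N)) := by
      apply Finite.of_injective (fun ψ : FreeGroup (Fin n) →* Equiv.Perm (Fin N) =>
        (fun i => ψ (FreeGroup.of i) : Fin n → Equiv.Perm (Fin N)))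
      intro ψ₁ ψ₂ h
      exact FreeGroup.ext_hom _ _ (fun a => congrFun h a)
    have hinj : Function.Injective
        (fun ψ : FreeGroup (Fin n) →* Equiv.Perm (Fin N) => ψ.comp f) := by
      intro ψ₁ ψ₂ h
      apply MonoidHom.ext
      intro x
      obtain ⟨y, rfl⟩ := hf x
      exact DFunLike.congr_fun h y
    have hsurj := (Finite.injective_iff_surjective.mp hinj) φ
    obtain ⟨ψ, hψ⟩ := hsurj
    apply hφ
    rw [← hψ]
    show ψ (f w) = 1
    rw [hw1, map_one]
  intro x y hxy
  have h1 : f (x * y⁻¹) = 1 := by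
    rw [map_mul, map_inv, hxy, mul_inv_cancel]
  have := hker _ h1
  rwa [mul_inv_eq_one] at this
end

section
/- Let A be a group, B ≤ A a subgroup, and D a group. Let A' = A * D be the free product. Then (A * D)/N_{A*D}(B) is isomorphic to (A/N_A(B)) * D, where N_G(B) denotes the normal closure of B in G. -/
open Monoid Subgroup QuotientGroup

/-- For groups `A`, `D`, a subgroup `B ≤ A` and the free product `A ∗ D`, the quotient
`(A ∗ D)/N_{A∗D}(B)` is isomorphic to `(A/N_A(B)) ∗ D`, where `N_G(B)` denotes the
normal closure (and `B` is viewed in `A ∗ D` via the canonical embedding of `A`). -/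
theorem stmt_14 (A D : Type*) [Group A] [Group D] (B : Subgroup A) :
    Nonempty
      ((Monoid.Coprod A D ⧸ Subgroup.normalClosure
          ((Monoid.Coprod.inl : A →* Monoid.Coprod A D) '' (B : Set A)))
        ≃* Monoid.Coprod (A ⧸ Subgroup.normalClosure (B : Set A)) D) := by
  set N : Subgroup A := Subgroup.normalClosure (B : Set A) with hN
  set N' : Subgroup (Monoid.Coprod A D) :=
    Subgroup.normalClosure ((Monoid.Coprod.inl : A →* Monoid.Coprod A D) '' (B : Set A)) with hN'
  have hNnorm : N.Normal := Subgroup.normalClosure_normal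
  have hN'norm : N'.Normal := Subgroup.normalClosure_normal
  -- forward map
  let φ : Monoid.Coprod A D →* Monoid.Coprod (A ⧸ N) D :=
    Coprod.lift ((Coprod.inl).comp (QuotientGroup.mk' N)) Coprod.inr
  have hker : N' ≤ φ.ker := by
    apply Subgroup.normalClosure_le_normal
    rintro _ ⟨b, hb, rfl⟩
    simp only [SetLike.mem_coe, MonoidHom.mem_ker, φ, Coprod.lift_apply_inl,
      MonoidHom.comp_apply, QuotientGroup.mk'_apply]
    have : (QuotientGroup.mk b : A ⧸ N) = 1 := by
      rw [QuotientGroup.eq_one_iff]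
      exact Subgroup.subset_normalClosure hb
    rw [this, map_one]
  let f : (Monoid.Coprod A D ⧸ N') →* Monoid.Coprod (A ⧸ N) D :=
    QuotientGroup.lift N' φ hker
  -- backward map
  have hker2 : ∀ a ∈ N, ((QuotientGroup.mk' N').comp Coprod.inl) a = 1 := by
    intro a ha
    have : N ≤ Subgroup.comap (Coprod.inl : A →* Monoid.Coprod A D) N' := by
      haveI := hN'norm
      apply Subgroup.normalClosure_le_normal
      intro b hb
      exact Subgroup.subset_normalClosure ⟨b, hb, rfl⟩
    have := this ha
    simpa [MonoidHom.comp_apply, QuotientGroup.eq_one_iff] using this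
  let g1 : (A ⧸ N) →* (Monoid.Coprod A D ⧸ N') :=
    QuotientGroup.lift N ((QuotientGroup.mk' N').comp Coprod.inl) hker2
  let ψ : Monoid.Coprod (A ⧸ N) D →* (Monoid.Coprod A D ⧸ N') :=
    Coprod.lift g1 ((QuotientGroup.mk' N').comp Coprod.inr)
  have h1 : ψ.comp f = MonoidHom.id _ := by
    apply QuotientGroup.monoidHom_ext
    apply Coprod.hom_ext
    · ext a; simp [f, ψ, φ, g1]; rfl
    · ext d; simp [f, ψ, φ, g1]
  have h2 : f.comp ψ = MonoidHom.id _ := by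
    apply Coprod.hom_ext
    · apply QuotientGroup.monoidHom_ext
      ext a; simp [f, ψ, φ, g1]; rfl
    · ext d; simp [f, ψ, φ, g1]
  exact ⟨MonoidHom.toMulEquiv f ψ h1 h2⟩
end

section
/- In the free group F on a countably infinite basis {x_i : i < ω}, the elements y_i = x_i x_{i+1}^{-2} (i < ω) freely generate the subgroup B = ⟨y_i : i < ω⟩; that is, B is free on {y_i : i < ω}. -/
open FreeGroup List

namespace Stmt18Aux

variable {α : Type*} [DecidableEq α]

/-- Pushing a letter onto a word whose reduction does not start with its inverse. -/
lemma cons_reduce (x : α × Bool) (L : List (α × Bool))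
    (h : ∀ y ∈ (FreeGroup.reduce L).head?, ¬(x.1 = y.1 ∧ x.2 = !y.2)) :
    FreeGroup.reduce (x :: L) = x :: FreeGroup.reduce L := by
  rw [FreeGroup.reduce.cons]
  cases hL : FreeGroup.reduce L with
  | nil => rfl
  | cons hd tl =>
    rw [hL] at h
    have hne := h hd (by simp)
    show (if x.1 = hd.1 ∧ x.2 = !hd.2 then tl else x :: hd :: tl) = x :: hd :: tl
    exact if_neg hne

/-- Cancelling a letter against the head of a reduced word. -/
lemma cancel_reduce (x : α × Bool) (L tl : List (α × Bool))
    (h : FreeGroup.reduce L = x :: tl) :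
    FreeGroup.reduce ((x.1, !x.2) :: L) = tl := by
  rw [FreeGroup.reduce.cons, h]
  show (if x.1 = x.1 ∧ (!x.2) = !x.2 then tl else (x.1, !x.2) :: x :: tl) = tl
  exact if_pos ⟨rfl, rfl⟩

/-- Key list computation for the "X" sets of the ping-pong lemma. -/
lemma keyX_list (i : ℕ) (L : List (ℕ × Bool)) (hL : FreeGroup.reduce L = L)
    (hw : ¬ [(i + 1, true), (i + 1, true)] <+: L) :
    [(i, true), (i + 1, false)] <+:
      FreeGroup.reduce ((i, true) :: (i + 1, false) :: (i + 1, false) :: L) := by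
  rcases hhd : L with _ | ⟨⟨j, b⟩, tl⟩
  · subst hhd
    have e3 : FreeGroup.reduce (α := ℕ) [(i + 1, false)] = [(i + 1, false)] :=
      FreeGroup.reduce_singleton _
    have e2 := cons_reduce (α := ℕ) (i + 1, false) [(i + 1, false)]
      (by rw [e3]; intro z hz; simp at hz; subst hz; simp)
    rw [e3] at e2
    have e1 := cons_reduce (α := ℕ) (i, true) [(i + 1, false), (i + 1, false)]
      (by rw [e2]; intro z hz; simp at hz; subst hz; simp; try omega)
    rw [e2] at e1
    rw [e1]
    exact ⟨[(i + 1, false)], rfl⟩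
  · subst hhd
    by_cases hb : (j, b) = (i + 1, true)
    · obtain ⟨rfl, rfl⟩ : j = i + 1 ∧ b = true :=
        ⟨congrArg Prod.fst hb, congrArg Prod.snd hb⟩
      have e3 : FreeGroup.reduce ((i + 1, false) :: (i + 1, true) :: tl) = tl := by
        have := cancel_reduce (α := ℕ) (i + 1, true) ((i + 1, true) :: tl) tl hL
        simpa using this
      have htl : ∀ z ∈ tl.head?, z ≠ ((i + 1 : ℕ), true) := by
        intro z hz hzt
        apply hw
        rcases tl with _ | ⟨u, tl2⟩
        · simp at hz
        · simp at hz; subst hz; subst hzt; exact ⟨tl2, rfl⟩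
      have e2 := cons_reduce (α := ℕ) (i + 1, false) ((i + 1, false) :: (i + 1, true) :: tl)
        (by
          rw [e3]; intro z hz hc
          rcases hc with ⟨h1, h2⟩
          apply htl z hz
          rcases z with ⟨z1, z2⟩
          simp at h1 h2
          cases z2
          · simp at h2
          · simp [h1])
      rw [e3] at e2
      have e1 := cons_reduce (α := ℕ) (i, true)
        ((i + 1, false) :: (i + 1, false) :: (i + 1, true) :: tl)
        (by rw [e2]; intro z hz; simp at hz; subst hz; simp; try omega)
      rw [e2] at e1
      rw [e1]
      exact ⟨tl, rfl⟩
    · have e3 := cons_reduce (α := ℕ) (i + 1, false) ((j, b) :: tl)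
        (by
          rw [hL]; intro z hz hc
          simp at hz; subst hz
          rcases hc with ⟨h1, h2⟩
          apply hb
          simp at h1 h2
          cases b
          · simp at h2
          · simp [h1])
      rw [hL] at e3
      have e2 := cons_reduce (α := ℕ) (i + 1, false) ((i + 1, false) :: (j, b) :: tl)
        (by rw [e3]; intro z hz; simp at hz; subst hz; simp)
      rw [e3] at e2
      have e1 := cons_reduce (α := ℕ) (i, true)
        ((i + 1, false) :: (i + 1, false) :: (j, b) :: tl)
        (by rw [e2]; intro z hz; simp at hz; subst hz; simp; try omega)
      rw [e2] at e1
      rw [e1]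
      exact ⟨(i + 1, false) :: (j, b) :: tl, rfl⟩

/-- Key list computation for the "Y" sets of the ping-pong lemma. -/
lemma keyY_list (i : ℕ) (L : List (ℕ × Bool)) (hL : FreeGroup.reduce L = L)
    (hw : ¬ [(i, true), (i + 1, false)] <+: L) :
    [(i + 1, true), (i + 1, true)] <+:
      FreeGroup.reduce ((i + 1, true) :: (i + 1, true) :: (i, false) :: L) := by
  rcases hhd : L with _ | ⟨⟨j, b⟩, tl⟩
  · subst hhd
    have e3 : FreeGroup.reduce (α := ℕ) [(i, false)] = [(i, false)] :=
      FreeGroup.reduce_singleton _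
    have e2 := cons_reduce (α := ℕ) (i + 1, true) [(i, false)]
      (by rw [e3]; intro z hz; simp at hz; subst hz; simp; try omega)
    rw [e3] at e2
    have e1 := cons_reduce (α := ℕ) (i + 1, true) [(i + 1, true), (i, false)]
      (by rw [e2]; intro z hz; simp at hz; subst hz; simp)
    rw [e2] at e1
    rw [e1]
    exact ⟨[(i, false)], rfl⟩
  · subst hhd
    by_cases hb : (j, b) = (i, true)
    · rw [hb] at hL hw ⊢
      have e3 : FreeGroup.reduce ((i, false) :: (i, true) :: tl) = tl := by
        have := cancel_reduce (α := ℕ) (i, true) ((i, true) :: tl) tl hL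
        simpa using this
      have htl : ∀ z ∈ tl.head?, z ≠ ((i + 1 : ℕ), false) := by
        intro z hz hzt
        apply hw
        rcases tl with _ | ⟨u, tl2⟩
        · simp at hz
        · simp at hz; subst hz; subst hzt; exact ⟨tl2, rfl⟩
      have e2 := cons_reduce (α := ℕ) (i + 1, true) ((i, false) :: (i, true) :: tl)
        (by
          rw [e3]; intro z hz hc
          rcases hc with ⟨h1, h2⟩
          apply htl z hz
          rcases z with ⟨z1, z2⟩
          simp at h1 h2
          cases z2
          · simp [h1]
          · simp at h2)
      rw [e3] at e2
      have e1 := cons_reduce (α := ℕ) (i + 1, true)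
        ((i + 1, true) :: (i, false) :: (i, true) :: tl)
        (by rw [e2]; intro z hz; simp at hz; subst hz; simp)
      rw [e2] at e1
      rw [e1]
      exact ⟨tl, rfl⟩
    · have e3 := cons_reduce (α := ℕ) (i, false) ((j, b) :: tl)
        (by
          rw [hL]; intro z hz hc
          simp at hz; subst hz
          rcases hc with ⟨h1, h2⟩
          apply hb
          simp at h1 h2
          cases b
          · simp at h2
          · simp [h1])
      rw [hL] at e3
      have e2 := cons_reduce (α := ℕ) (i + 1, true) ((i, false) :: (j, b) :: tl)
        (by rw [e3]; intro z hz; simp at hz; subst hz; simp; try omega)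
      rw [e3] at e2
      have e1 := cons_reduce (α := ℕ) (i + 1, true)
        ((i + 1, true) :: (i, false) :: (j, b) :: tl)
        (by rw [e2]; intro z hz; simp at hz; subst hz; simp)
      rw [e2] at e1
      rw [e1]
      exact ⟨(i, false) :: (j, b) :: tl, rfl⟩

/-- Key computation for the "X" sets of the ping-pong lemma. -/
lemma keyX (i : ℕ) (w : FreeGroup ℕ)
    (hw : ¬ [(i + 1, true), (i + 1, true)] <+: w.toWord) :
    [(i, true), (i + 1, false)] <+:
      (FreeGroup.mk [(i, true), (i + 1, false), (i + 1, false)] * w).toWord := by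
  have hmk : FreeGroup.mk [(i, true), (i + 1, false), (i + 1, false)] * w
      = FreeGroup.mk ([(i, true), (i + 1, false), (i + 1, false)] ++ w.toWord) := by
    conv_lhs => rw [← FreeGroup.mk_toWord (x := w)]
    rw [FreeGroup.mul_mk]
  rw [hmk, FreeGroup.toWord_mk]
  exact keyX_list i w.toWord (FreeGroup.reduce_toWord w) hw

/-- Key computation for the "Y" sets of the ping-pong lemma. -/
lemma keyY (i : ℕ) (w : FreeGroup ℕ)
    (hw : ¬ [(i, true), (i + 1, false)] <+: w.toWord) :
    [(i + 1, true), (i + 1, true)] <+: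
      (FreeGroup.mk [(i + 1, true), (i + 1, true), (i, false)] * w).toWord := by
  have hmk : FreeGroup.mk [(i + 1, true), (i + 1, true), (i, false)] * w
      = FreeGroup.mk ([(i + 1, true), (i + 1, true), (i, false)] ++ w.toWord) := by
    conv_lhs => rw [← FreeGroup.mk_toWord (x := w)]
    rw [FreeGroup.mul_mk]
  rw [hmk, FreeGroup.toWord_mk]
  exact keyY_list i w.toWord (FreeGroup.reduce_toWord w) hw

lemma prefix_eq {β : Type*} {l₁ l₂ L : List β} (h1 : l₁ <+: L) (h2 : l₂ <+: L)
    (h : l₁.length = l₂.length) : l₁ = l₂ :=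
  (List.prefix_of_prefix_length_le h1 h2 h.le).eq_of_length h

end Stmt18Aux

open Stmt18Aux

/-- In the free group `F` on a countably infinite basis `{x_i : i < ω}`, the elements
`y_i = x_i * x_{i+1}⁻²` freely generate the subgroup they generate: the induced
homomorphism `FreeGroup ℕ → F` sending the `i`-th generator to `y_i` is injective. -/
theorem stmt_18 (y : ℕ → FreeGroup ℕ)
    (hy : ∀ i, y i = FreeGroup.of i * ((FreeGroup.of (i + 1)) ^ 2)⁻¹) :
    Function.Injective (FreeGroup.lift y : FreeGroup ℕ →* FreeGroup ℕ) := by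
  have hmkY : ∀ i, y i = FreeGroup.mk [(i, true), (i + 1, false), (i + 1, false)] := by
    intro i
    rw [hy]
    have h1 : FreeGroup.of i = FreeGroup.mk [(i, true)] := rfl
    have h2 : (FreeGroup.of (i + 1)) ^ 2
        = FreeGroup.mk [(i + 1, true), (i + 1, true)] := by
      rw [sq]
      show FreeGroup.mk [(i + 1, true)] * FreeGroup.mk [(i + 1, true)] = _
      rw [FreeGroup.mul_mk]
      rfl
    rw [h1, h2, FreeGroup.inv_mk, FreeGroup.mul_mk]
    simp [FreeGroup.invRev]
  have hmkYinv : ∀ i, (y i)⁻¹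
      = FreeGroup.mk [(i + 1, true), (i + 1, true), (i, false)] := by
    intro i
    rw [hmkY, FreeGroup.inv_mk]
    simp [FreeGroup.invRev]
  set X : ℕ → Set (FreeGroup ℕ) :=
    fun i => {w | [(i, true), (i + 1, false)] <+: w.toWord} with hXdef
  set Y : ℕ → Set (FreeGroup ℕ) :=
    fun i => {w | [(i + 1, true), (i + 1, true)] <+: w.toWord} with hYdef
  apply FreeGroup.injective_lift_of_ping_pong y X Y
  · -- nonempty
    intro i
    refine ⟨FreeGroup.mk [(i, true), (i + 1, false)], ?_⟩
    have h0 : (FreeGroup.mk [(i, true), (i + 1, false)]).toWord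
        = [(i, true), (i + 1, false)] := by
      rw [FreeGroup.toWord_mk]
      have e0 : FreeGroup.reduce (α := ℕ) [(i + 1, false)] = [(i + 1, false)] :=
        FreeGroup.reduce_singleton _
      have := cons_reduce (α := ℕ) (i, true) [(i + 1, false)]
        (by rw [e0]; intro z hz; simp at hz; subst hz; simp; try omega)
      rw [e0] at this; exact this
    show _ <+: _
    rw [h0]
  · -- X pairwise disjoint
    intro i j hij
    rw [Function.onFun, Set.disjoint_left]
    intro a ha hb
    have := prefix_eq ha hb rfl
    simp at this
    omega
  · -- Y pairwise disjoint
    intro i j hij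
    rw [Function.onFun, Set.disjoint_left]
    intro a ha hb
    have := prefix_eq ha hb rfl
    simp at this
    omega
  · -- X vs Y disjoint
    intro i j
    rw [Set.disjoint_left]
    intro a ha hb
    have := prefix_eq ha hb rfl
    simp at this
  · -- ping
    intro i g hg
    rw [Set.mem_smul_set] at hg
    obtain ⟨w, hw, rfl⟩ := hg
    have hw' : ¬ [(i + 1, true), (i + 1, true)] <+: w.toWord := hw
    show _ <+: _
    rw [smul_eq_mul, hmkY i]
    exact keyX i w hw'
  · -- pong
    intro i g hg
    rw [Set.mem_smul_set] at hg
    obtain ⟨w, hw, rfl⟩ := hg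
    have hw' : ¬ [(i, true), (i + 1, false)] <+: w.toWord := hw
    show _ <+: _
    rw [smul_eq_mul, Pi.inv_apply, hmkYinv i]
    exact keyY i w hw'
end
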